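/- arXiv:2110.01419 — 2 statements merged into one kernel-verified Lean document; each statement's English description precedes it below -/
import Mathlib

section
/- For the KP Lax operator L and k ≥ 1, the coefficients of the pseudo-differential operator L^k - ∂ₓ^k - Σ_{i≥1} Σ_{l=0}^{k-1} (k choose l) fᵢ^{(k-1-l)} ∂ₓ^{-i+l} are polynomials in the fᵢ^{(j)} with no constant and no linear terms (every monomial has total degree at least 2 in the variables fᵢ^{(j)}). -/
/-- Generalized binomial coefficient `k(k-1)⋯(k-l+1)/l!` for `k : ℤ`, `l : ℕ`. -/
def zchoose (k : ℤ) (l : ℕ) : ℤ :=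
  if 0 ≤ k then (k.toNat).choose l else (-1) ^ l * ((l - 1 - k).toNat).choose l

/-- Composition of pseudo-differential operators `A = Σ aₙ ∂ⁿ`, `B = Σ bₙ ∂ⁿ` (given by
their coefficient functions `ℤ → R`, supported in degrees bounded above) over a
differential ring `(R, d)`, using the rule
`∂ᵏ ∘ a = Σ_{l≥0} (k(k-1)⋯(k-l+1)/l!) (dˡ a) ∂^{k-l}`. -/
noncomputable def pdoComp {R : Type*} [CommRing R] (d : R → R) (A B : ℤ → R) : ℤ → R :=
  fun n => ∑ᶠ p : ℤ × ℕ, A p.1 * (zchoose p.1 p.2 • d^[p.2] (B (n + p.2 - p.1)))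

/-- The formal adjoint `(Σ aₙ ∂ⁿ)† = Σ (-∂)ⁿ ∘ aₙ`. -/
noncomputable def pdoAdj {R : Type*} [CommRing R] (d : R → R) (A : ℤ → R) : ℤ → R :=
  fun m => ∑ᶠ l : ℕ, ((-1) ^ (m + l).natAbs : ℤ) •
    (zchoose (m + l) l • d^[l] (A (m + l)))

/-- The residue of a pseudo-differential operator: the coefficient of `∂^{-1}`. -/
def pdoRes {R : Type*} [CommRing R] (A : ℤ → R) : R := A (-1)

/-- The differential polynomial ring `ℂ[f_i^{(j)}]` in the variables `f_i^{(j)}`,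
`i ≥ 1`, `j ≥ 0` (indexed by pairs `(i,j)`). -/
noncomputable abbrev DPRing : Type := MvPolynomial (ℕ × ℕ) ℂ

/-- The variable `f_i^{(j)}`. -/
noncomputable def fv (i j : ℕ) : DPRing := MvPolynomial.X (i, j)

/-- The derivation `∂ₓ` with `∂ₓ f_i^{(j)} = f_i^{(j+1)}`. -/
noncomputable def Dx : Derivation ℂ DPRing DPRing :=
  MvPolynomial.mkDerivation ℂ (fun p : ℕ × ℕ => MvPolynomial.X (p.1, p.2 + 1))

/-- The KP Lax operator `L = ∂ₓ + Σ_{i≥1} fᵢ ∂ₓ^{-i}` as a coefficient function. -/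
noncomputable def Lop : ℤ → DPRing :=
  fun n => if n = 1 then 1 else if n ≤ -1 then fv (-n).toNat 0 else 0

/-- Powers of a pseudo-differential operator. -/
noncomputable def pdoPow {R : Type*} [CommRing R] (d : R → R) (A : ℤ → R) : ℕ → (ℤ → R)
  | 0 => fun n => if n = 0 then 1 else 0
  | k + 1 => pdoComp d A (pdoPow d A k)

/-- `L^k` as a pseudo-differential operator. -/
noncomputable def Lpow (k : ℕ) : ℤ → DPRing := pdoPow (⇑Dx) Lop k

/-- The purely differential part `A₊` of a pseudo-differential operator. -/
def pdoPlus {R : Type*} [CommRing R] (A : ℤ → R) : ℤ → R :=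
  fun n => if 0 ≤ n then A n else 0

/-- The commutator of two pseudo-differential operators. -/
noncomputable def pdoBracket {R : Type*} [CommRing R] (d : R → R) (A B : ℤ → R) : ℤ → R :=
  fun n => pdoComp d A B n - pdoComp d B A n

/-- `S_{i,2}`: the coefficient of `∂ₓ^{-i}` in `[(L²)₊, L]`, i.e. the second KP flow
`∂fᵢ/∂T₂`. -/
noncomputable def S2 (i : ℕ) : DPRing :=
  pdoBracket (⇑Dx) (pdoPlus (Lpow 2)) Lop (-(i : ℤ))

/-- The total degree of a monomial (exponent function). -/
def mdeg (m : (ℕ × ℕ) →₀ ℕ) : ℕ := ∑ x ∈ m.support, m x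

/-!
Write `L = ∂ₓ + L₋` with `L₋ = Σ_{i≥1} fᵢ ∂ₓ^{-i}`, and `L^k = ∂ₓ^k + Λ_k + Q_k` with `Λ_k` the
claimed linear part. Then `L^{k+1} = ∂ₓ ∘ L^k + L₋ ∘ ∂ₓ^k + L₋ ∘ (L^k - ∂ₓ^k)`, where
`∂ₓ ∘ ∂ₓ^k = ∂ₓ^{k+1}` and `∂ₓ ∘ Λ_k + L₋ ∘ ∂ₓ^k = Λ_{k+1}` by Pascal's rule, so
`Q_{k+1} = ∂ₓ ∘ Q_k + L₋ ∘ (L^k - ∂ₓ^k)`. Both factors of the last composition have coefficients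
without constant term, and `∂ₓ` preserves the ideal of polynomials whose monomials all have
degree `≥ d`, since it sends variables to variables. By induction, every coefficient of `Q_k` lies
in that ideal for `d = 2`.
-/

namespace MvPolynomial

variable (σ R : Type*) [CommSemiring R]

def orderGE (d : ℕ) : Ideal (MvPolynomial σ R) where
  carrier := {p | ∀ s ∈ p.support, d ≤ s.degree}
  zero_mem' := by simp
  add_mem' {p q} hp hq s hs := by
    classical
    rcases Finset.mem_union.1 (support_add hs) with h | h
    exacts [hp s h, hq s h]
  smul_mem' c p hp s hs := by
    classical
    obtain ⟨s₁, -, s₂, hs₂, rfl⟩ := Finset.mem_add.1 (support_mul c p hs)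
    exact (hp s₂ hs₂).trans (by simp)

variable {σ R}

theorem orderGE_anti {d e : ℕ} (h : e ≤ d) : orderGE σ R d ≤ orderGE σ R e :=
  fun _ hp s hs => h.trans (hp s hs)

theorem orderGE_mul_le (a b : ℕ) : orderGE σ R a * orderGE σ R b ≤ orderGE σ R (a + b) := by
  classical
  refine Ideal.mul_le.2 fun p hp q hq s hs => ?_
  obtain ⟨s₁, hs₁, s₂, hs₂, rfl⟩ := Finset.mem_add.1 (support_mul p q hs)
  rw [map_add]
  exact add_le_add (hp s₁ hs₁) (hq s₂ hs₂)

theorem monomial_mem_orderGE (s : σ →₀ ℕ) (r : R) : monomial s r ∈ orderGE σ R s.degree := by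
  intro t ht
  rw [Finset.mem_singleton.1 (support_monomial_subset ht)]

theorem X_mem_orderGE_one (i : σ) : X i ∈ orderGE σ R 1 := by
  simpa [X] using monomial_mem_orderGE (R := R) (Finsupp.single i 1) 1

theorem _root_.Derivation.map_mem_orderGE (D : Derivation R (MvPolynomial σ R) (MvPolynomial σ R))
    (hD : ∀ i, D (X i) ∈ orderGE σ R 1) {d : ℕ} {p : MvPolynomial σ R}
    (hp : p ∈ orderGE σ R d) : D p ∈ orderGE σ R d := by
  have hmk : D = mkDerivation R (fun i => D (X i)) := derivation_ext fun i => by simp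
  rw [p.as_sum, map_sum]
  refine Ideal.sum_mem _ fun s hs => orderGE_anti (hp s hs) ?_
  rw [hmk, mkDerivation_monomial, smul_eq_C_mul]
  refine Ideal.mul_mem_left _ _ (Ideal.sum_mem _ fun i hi => ?_)
  have hdeg : (s - Finsupp.single i 1).degree + 1 = s.degree := by
    nth_rw 2 [← Finsupp.degree_single i 1]
    rw [← map_add, tsub_add_cancel_of_le]
    exact Finsupp.single_le_iff.2 (Nat.one_le_iff_ne_zero.2 (Finsupp.mem_support_iff.1 hi))
  rw [← hdeg]
  dsimp only
  rw [smul_eq_mul]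
  exact orderGE_mul_le _ _ (Ideal.mul_mem_mul (monomial_mem_orderGE _ _) (hD i))

end MvPolynomial

theorem zchoose_zero (z : ℤ) : zchoose z 0 = 1 := by
  unfold zchoose; split <;> simp

theorem zchoose_one_left (l : ℕ) : zchoose 1 l = (Nat.choose 1 l : ℤ) := by
  simp [zchoose]

section PseudoDifferential

open Function

variable {R : Type*} [CommRing R]

def pdoCompTerm (d : R → R) (A B : ℤ → R) (n : ℤ) (p : ℤ × ℕ) : R :=
  A p.1 * (zchoose p.1 p.2 • d^[p.2] (B (n + p.2 - p.1)))

theorem pdoComp_eq_finsum (d : R → R) (A B : ℤ → R) (n : ℤ) :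
    pdoComp d A B n = ∑ᶠ p, pdoCompTerm d A B n p :=
  rfl

theorem pdoComp_mem_mul (d : R → R) {A B : ℤ → R} {I J : Ideal R} (hA : ∀ m, A m ∈ I)
    (hB : ∀ m, B m ∈ J) (hd : ∀ x ∈ J, d x ∈ J) (n : ℤ) : pdoComp d A B n ∈ I * J := by
  have hdJ : ∀ j x, x ∈ J → d^[j] x ∈ J := fun j x hx => by
    induction j with
    | zero => exact hx
    | succ j ih => rw [iterate_succ_apply']; exact hd _ ih
  refine finsum_induction (· ∈ I * J) (zero_mem _) (fun _ _ => add_mem) fun p => ?_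
  exact Ideal.mul_mem_mul (hA _) (zsmul_mem (hdJ _ _ (hB _)) _)

theorem pdoComp_single_one_left (d : R → R) (B : ℤ → R) (n : ℤ) :
    pdoComp d (Pi.single 1 1) B n = B (n - 1) + d (B n) := by
  rw [pdoComp_eq_finsum, finsum_eq_sum_of_support_subset _ (s := {(1, 0), (1, 1)}),
    Finset.sum_pair (by simp)]
  · simp [pdoCompTerm, zchoose_zero, zchoose_one_left]
  · intro p hp
    obtain ⟨a, l⟩ := p
    simp only [mem_support, pdoCompTerm, Pi.single_apply] at hp
    split_ifs at hp with ha
    · subst ha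
      have hl : l ≤ 1 := by
        by_contra! hl
        simp [zchoose_one_left, Nat.choose_eq_zero_of_lt hl] at hp
      interval_cases l <;> simp
    · simp at hp

variable {F : Type*} [FunLike F R R] [AddMonoidHomClass F R R] (d : F)

theorem support_pdoCompTerm_subset {A B : ℤ → R} {a b : ℤ} (hA : a ∈ upperBounds A.support)
    (hB : b ∈ upperBounds B.support) (n : ℤ) :
    (pdoCompTerm d A B n).support ⊆ Set.Icc (n - b) a ×ˢ Set.Iio (a + b - n + 1).toNat := by
  intro p hp
  have h1 : p.1 ≤ a := hA fun h => hp (by simp [pdoCompTerm, h])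
  have h2 : n + p.2 - p.1 ≤ b :=
    hB fun h => hp (by simp [pdoCompTerm, h])
  simp only [Set.mem_prod, Set.mem_Icc, Set.mem_Iio]
  omega

theorem finite_support_pdoCompTerm {A B : ℤ → R} (hA : BddAbove A.support)
    (hB : BddAbove B.support) (n : ℤ) : (pdoCompTerm d A B n).support.Finite := by
  obtain ⟨a, ha⟩ := hA
  obtain ⟨b, hb⟩ := hB
  exact ((Set.finite_Icc _ _).prod (Set.finite_Iio _)).subset
    (support_pdoCompTerm_subset d ha hb n)

theorem bddAbove_support_pdoComp {A B : ℤ → R} (hA : BddAbove A.support)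
    (hB : BddAbove B.support) : BddAbove (pdoComp d A B).support := by
  obtain ⟨a, ha⟩ := hA
  obtain ⟨b, hb⟩ := hB
  refine ⟨a + b, fun n hn => ?_⟩
  by_contra! hab
  refine hn (finsum_eq_zero_of_forall_eq_zero fun p => ?_)
  by_contra hp
  have := support_pdoCompTerm_subset d ha hb n hp
  simp only [Set.mem_prod, Set.mem_Icc, Set.mem_Iio] at this
  omega

theorem bddAbove_support_pdoPow {A : ℤ → R} (hA : BddAbove A.support) (k : ℕ) :
    BddAbove (pdoPow d A k).support := by
  induction k with
  | zero => exact ⟨0, fun n hn => by by_contra h; exact hn (if_neg (by omega))⟩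
  | succ k ih => exact bddAbove_support_pdoComp d hA ih

theorem pdoComp_add_left {A A' B : ℤ → R} (hA : BddAbove A.support) (hA' : BddAbove A'.support)
    (hB : BddAbove B.support) (n : ℤ) :
    pdoComp d (A + A') B n = pdoComp d A B n + pdoComp d A' B n := by
  simp only [pdoComp_eq_finsum]
  rw [← finsum_add_distrib (finite_support_pdoCompTerm d hA hB n)
    (finite_support_pdoCompTerm d hA' hB n)]
  exact finsum_congr fun p => add_mul _ _ _

theorem pdoComp_add_right {A B B' : ℤ → R} (hA : BddAbove A.support) (hB : BddAbove B.support)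
    (hB' : BddAbove B'.support) (n : ℤ) :
    pdoComp d A (B + B') n = pdoComp d A B n + pdoComp d A B' n := by
  simp only [pdoComp_eq_finsum]
  rw [← finsum_add_distrib (finite_support_pdoCompTerm d hA hB n)
    (finite_support_pdoCompTerm d hA hB' n)]
  refine finsum_congr fun p => ?_
  simp only [pdoCompTerm, Pi.add_apply, iterate_map_add, smul_add, mul_add]

theorem pdoComp_single_right (hd : d 1 = 0) (A : ℤ → R) (k n : ℤ) :
    pdoComp d A (Pi.single k 1) n = A (n - k) := by
  have hvanish : ∀ j m, j ≠ 0 → (⇑d)^[j] ((Pi.single k 1 : ℤ → R) m) = 0 := by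
    intro j m hj
    obtain ⟨j, rfl⟩ := Nat.exists_eq_succ_of_ne_zero hj
    rw [iterate_succ_apply, Pi.single_apply]
    split_ifs <;> simp [hd]
  rw [pdoComp_eq_finsum, finsum_eq_single _ (n - k, 0)]
  · simp [pdoCompTerm, zchoose_zero]
  · rintro ⟨a, l⟩ hp
    by_cases hl : l = 0
    · subst hl
      have : n - a ≠ k := fun h => hp (by rw [← h]; simp)
      simp [pdoCompTerm, this]
    · simp [pdoCompTerm, hvanish l _ hl]

end PseudoDifferential

theorem Finset.sum_range_succ_choose_nsmul {M : Type*} [AddCommMonoid M] (g : ℕ → ℕ → M)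
    (k : ℕ) :
    ∑ l ∈ Finset.range (k + 1), (k + 1).choose l • g l (k - l) =
      ∑ l ∈ Finset.range k, k.choose l • g (l + 1) (k - 1 - l) +
        ∑ l ∈ Finset.range k, k.choose l • g l (k - l) + g k 0 := by
  have hshift : ∑ l ∈ Finset.range k, k.choose (l + 1) • g (l + 1) (k - (l + 1)) + g 0 k =
      ∑ l ∈ Finset.range k, k.choose l • g l (k - l) + g k 0 := by
    calc _ = ∑ l ∈ Finset.range (k + 1), k.choose l • g l (k - l) := by
          simp [Finset.sum_range_succ']
      _ = _ := by simp [Finset.sum_range_succ]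
  rw [Finset.sum_range_succ', add_assoc, ← hshift]
  simp [Nat.choose_succ_succ, add_smul, Finset.sum_add_distrib, Nat.sub_sub, Nat.add_comm 1,
    add_assoc]

section KP

open MvPolynomial

/-- `fᵢ^{(j)}` indexed by `i : ℤ`, with `fᵢ = 0` for `i ≤ 0`. -/
noncomputable def fvInt (i : ℤ) (j : ℕ) : DPRing := if 1 ≤ i then fv i.toNat j else 0

/-- The part `Σ_{i≥1} fᵢ ∂ₓ^{-i}` of `L`. -/
noncomputable def LopNeg : ℤ → DPRing := fun n => fvInt (-n) 0

/-- `Σ_{i≥1} Σ_{l<k} (k choose l) fᵢ^{(k-1-l)} ∂ₓ^{l-i}`, the part of `L^k` linear in the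
`fᵢ^{(j)}`. -/
noncomputable def LpowLinear (k : ℕ) : ℤ → DPRing := fun n =>
  ∑ l ∈ Finset.range k, (k.choose l : ℂ) • fvInt (l - n) (k - 1 - l)

theorem Lop_eq_add : Lop = Pi.single 1 1 + LopNeg := by
  ext n
  simp only [Lop, LopNeg, fvInt, Pi.add_apply, Pi.single_apply]
  split_ifs <;> first | omega | simp

theorem Dx_fvInt (i : ℤ) (j : ℕ) : Dx (fvInt i j) = fvInt i (j + 1) := by
  unfold fvInt fv Dx
  split_ifs <;> simp

theorem Dx_mem_orderGE {d : ℕ} {p : DPRing} (hp : p ∈ orderGE _ _ d) : Dx p ∈ orderGE _ _ d :=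
  Derivation.map_mem_orderGE Dx (fun _ => by simp [Dx, X_mem_orderGE_one]) hp

theorem fvInt_mem_orderGE_one (i : ℤ) (j : ℕ) : fvInt i j ∈ orderGE _ _ 1 := by
  unfold fvInt fv
  split_ifs
  exacts [X_mem_orderGE_one _, zero_mem _]

theorem LpowLinear_mem_orderGE_one (k : ℕ) (n : ℤ) : LpowLinear k n ∈ orderGE _ _ 1 :=
  Ideal.sum_mem _ fun _ _ => Submodule.smul_of_tower_mem _ _ (fvInt_mem_orderGE_one _ _)

theorem LpowLinear_succ (k : ℕ) (n : ℤ) :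
    LpowLinear (k + 1) n = LpowLinear k (n - 1) + Dx (LpowLinear k n) + fvInt (k - n) 0 := by
  have h := Finset.sum_range_succ_choose_nsmul (fun l j => fvInt (l - n) j) k
  simp only [LpowLinear, map_sum, Nat.cast_smul_eq_nsmul, map_nsmul, Dx_fvInt]
  convert h using 3
  · simp
  · refine Finset.sum_congr rfl fun l _ => ?_
    push_cast
    ring_nf
  · refine Finset.sum_congr rfl fun l hl => ?_
    rw [show k - 1 - l + 1 = k - l by simp at hl; omega]

theorem bddAbove_support_single (k : ℤ) : BddAbove (Pi.single k 1 : ℤ → DPRing).support :=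
  ⟨k, fun n hn => by by_contra h; exact hn (Pi.single_eq_of_ne (by omega) _)⟩

theorem bddAbove_support_LopNeg : BddAbove LopNeg.support :=
  ⟨-1, fun n hn => by by_contra h; exact hn (if_neg (by omega))⟩

theorem bddAbove_support_Lpow (k : ℕ) : BddAbove (Lpow k).support := by
  refine bddAbove_support_pdoPow Dx ?_ k
  rw [Lop_eq_add]
  exact ((bddAbove_support_single 1).union bddAbove_support_LopNeg).mono
    (Function.support_add _ _)

theorem Dx_single (k n : ℤ) : Dx ((Pi.single k 1 : ℤ → DPRing) n) = 0 := by
  rw [Pi.single_apply]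
  split_ifs <;> simp

theorem Lpow_succ_apply (k : ℕ) (n : ℤ) :
    Lpow (k + 1) n = Lpow k (n - 1) + Dx (Lpow k n) + fvInt (k - n) 0 +
      pdoComp Dx LopNeg (Lpow k - Pi.single (k : ℤ) 1) n := by
  have hsplit : Lpow k = Pi.single (k : ℤ) 1 + (Lpow k - Pi.single (k : ℤ) 1) := by abel
  have hbdd : BddAbove (Lpow k - Pi.single (k : ℤ) 1).support :=
    ((bddAbove_support_Lpow k).union (bddAbove_support_single k)).mono (Function.support_sub _ _)
  rw [Lpow, pdoPow, ← Lpow, Lop_eq_add, pdoComp_add_left Dx (bddAbove_support_single 1)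
    bddAbove_support_LopNeg (bddAbove_support_Lpow k), pdoComp_single_one_left]
  conv_lhs => rw [hsplit]
  rw [pdoComp_add_right Dx bddAbove_support_LopNeg (bddAbove_support_single k) hbdd,
    pdoComp_single_right Dx (Derivation.map_one_eq_zero Dx), ← hsplit]
  simp only [LopNeg, neg_sub, add_assoc]

noncomputable def LpowRemainder (k : ℕ) : ℤ → DPRing :=
  Lpow k - Pi.single (k : ℤ) 1 - LpowLinear k

theorem LpowRemainder_succ (k : ℕ) (n : ℤ) :
    LpowRemainder (k + 1) n = LpowRemainder k (n - 1) + Dx (LpowRemainder k n) +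
      pdoComp Dx LopNeg (Lpow k - Pi.single (k : ℤ) 1) n := by
  have hshift : (Pi.single ((k + 1 : ℕ) : ℤ) 1 : ℤ → DPRing) n =
      (Pi.single (k : ℤ) 1 : ℤ → DPRing) (n - 1) := by
    simp [Pi.single_apply, sub_eq_iff_eq_add]
  simp only [LpowRemainder, Pi.sub_apply]
  rw [Lpow_succ_apply, LpowLinear_succ, map_sub, map_sub, Dx_single, hshift]
  abel

theorem LpowRemainder_mem_orderGE_two (k : ℕ) (n : ℤ) : LpowRemainder k n ∈ orderGE _ _ 2 := by
  induction k generalizing n with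
  | zero => simp [LpowRemainder, Lpow, pdoPow, LpowLinear, Pi.single_apply]
  | succ k ih =>
    have hlow : ∀ m, (Lpow k - Pi.single (k : ℤ) 1 : ℤ → DPRing) m ∈ orderGE _ _ 1 := fun m => by
      simpa [LpowRemainder] using
        add_mem (orderGE_anti (by norm_num) (ih m)) (LpowLinear_mem_orderGE_one k m)
    rw [LpowRemainder_succ]
    refine add_mem (add_mem (ih _) (Dx_mem_orderGE (ih n))) (orderGE_mul_le 1 1 ?_)
    exact pdoComp_mem_mul _ (fun _ => fvInt_mem_orderGE_one _ _) hlow (fun _ => Dx_mem_orderGE) n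

end KP

theorem Lpow_remainder_quadratic_general (k : ℕ) :
    ∀ n : ℤ, ∀ m ∈ (Lpow k n - (if n = (k : ℤ) then 1 else 0) -
        ∑ l ∈ Finset.range k, (if 1 ≤ (l : ℤ) - n then
          (k.choose l : ℂ) • fv ((l - n).toNat) (k - 1 - l) else 0)).support,
      2 ≤ mdeg m := by
  intro n
  have hlin : ∑ l ∈ Finset.range k, (if 1 ≤ (l : ℤ) - n then
      (k.choose l : ℂ) • fv ((l - n).toNat) (k - 1 - l) else 0) = LpowLinear k n := by
    simp only [LpowLinear, fvInt, smul_ite, smul_zero]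
  rw [hlin, ← Pi.single_apply]
  -- `mdeg` is `Finsupp.degree` unfolded
  exact LpowRemainder_mem_orderGE_two k n

/-- For `k ≥ 1`, every coefficient of
`L^k - ∂ₓ^k - Σ_{i≥1} Σ_{l=0}^{k-1} (k choose l) fᵢ^{(k-1-l)} ∂ₓ^{-i+l}`
is a differential polynomial all of whose monomials have total degree at least `2`
in the variables `fᵢ^{(j)}`. -/
theorem Lpow_remainder_quadratic (k : ℕ) (hk : 1 ≤ k) :
    ∀ n : ℤ, ∀ m ∈ (Lpow k n - (if n = (k : ℤ) then 1 else 0) -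
        ∑ l ∈ Finset.range k, (if 1 ≤ (l : ℤ) - n then
          (k.choose l : ℂ) • fv ((l - n).toNat) (k - 1 - l) else 0)).support,
      2 ≤ mdeg m :=
  Lpow_remainder_quadratic_general k
end

section
/- Let w_k(f) := res L^k. Then modulo terms of total degree ≥ 2 in the variables fᵢ^{(j)} and modulo differential polynomials in the variables f_a^{(l)} with a ≤ k-3, one has w_k = Σ_{i=0}^{k-1} (k choose k-1-i) f_{k-i}^{(i)} + (k(k-1)/(1+δ_{k,3})) f₁ f_{k-2}, i.e. the linear part of w_k is Σ_{i=0}^{k-1} (k choose k-1-i) f_{k-i}^{(i)} and the coefficient of f₁f_{k-2} in w_k is k(k-1)/(1+δ_{k,3}) for k ≥ 3. -/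
/-!
Write `L^k = Σ (L^k)_n ∂ₓⁿ`. Giving `f_i^{(j)}` the weight `i + j + 1`, the coefficient `(L^k)_n`
is weighted homogeneous of weight `k - n` and only involves variables `f_i^{(j)}` with `i ≥ 1`.
Expanding `L^{k+1} = L ∘ L^k`, on monomials without derivatives only the terms `(L^k)_{n-1}` and
`f_i (L^k)_{n+i}` contribute, and on monomials made of derivatives only `(L^k)_{n-1}` and
`∂ₓ (L^k)_n`. Induction on `k` then gives the coefficient `C(k, l+1)` of `f_i^{(l)}` and the
coefficient `k(k-1)` of `f₁ f_c` (`k(k-1)/2` of `f₁²`) in the coefficient of the right weight.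
Finally, every factor of a remaining monomial has weight at least two, so a monomial of weight
`k + 1` and degree at least two that contains some `f_a^{(l)}` with `a ≥ k - 2` is `f₁ f_{k-2}`.
-/

open MvPolynomial

lemma zchoose_zero_right (k : ℤ) : zchoose k 0 = 1 := by
  unfold zchoose; split_ifs <;> simp

lemma zchoose_one_one : zchoose 1 1 = 1 := by
  simp [zchoose]

lemma zchoose_one_of_two_le {l : ℕ} (hl : 2 ≤ l) : zchoose 1 l = 0 := by
  simp [zchoose, Nat.choose_eq_zero_of_lt (show 1 < l by omega)]

lemma Lop_one : Lop 1 = 1 := by simp [Lop]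

lemma Lop_neg_natCast {i : ℕ} (hi : 1 ≤ i) : Lop (-(i : ℤ)) = fv i 0 := by
  simp [Lop, show -(i : ℤ) ≠ 1 by omega, show -(i : ℤ) ≤ -1 by omega]

lemma Lop_eq_zero {z : ℤ} (h1 : z ≠ 1) (h2 : -1 < z) : Lop z = 0 := by
  simp [Lop, h1, show ¬ z ≤ -1 by omega]

lemma support_pdoComp_Lop_summand_subset {B : ℤ → DPRing} {N : ℤ} (hB : ∀ m, N < m → B m = 0)
    (n : ℤ) :
    Function.support
        (fun p : ℤ × ℕ => Lop p.1 * (zchoose p.1 p.2 • (⇑Dx)^[p.2] (B (n + p.2 - p.1)))) ⊆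
      ↑(insert (1, 0) (insert (1, 1)
        ((Finset.Icc 1 (N - n).toNat ×ˢ Finset.range (N - n).toNat).image
          fun q => (-(q.1 : ℤ), q.2))) : Finset (ℤ × ℕ)) := by
  intro p hp
  simp only [Finset.coe_insert, Set.mem_insert_iff, Finset.coe_image, Set.mem_image,
    Finset.coe_product, Set.mem_prod, Finset.coe_Icc, Set.mem_Icc, Finset.coe_range, Set.mem_Iio]
  by_cases hp1 : p.1 = 1
  · have : p.2 ≤ 1 := by
      by_contra h
      exact hp (by simp [hp1, zchoose_one_of_two_le (show 2 ≤ p.2 by omega)])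
    rcases Nat.le_one_iff_eq_zero_or_eq_one.mp this with h | h
    · exact Or.inl (Prod.ext hp1 h)
    · exact Or.inr (Or.inl (Prod.ext hp1 h))
  by_cases hp2 : p.1 ≤ -1
  · have hle : n + p.2 - p.1 ≤ N := by
      by_contra h
      exact hp (by simp [hB _ (not_le.mp h)])
    exact Or.inr (Or.inr ⟨((-p.1).toNat, p.2), by omega, by ext <;> dsimp only; omega⟩)
  · exact absurd (by simp [Lop_eq_zero hp1 (by omega)]) hp

-- `∂ₓ ∘ b = b ∂ₓ + b'` gives the first two terms, the `f_i ∂ₓ^{-i}` the (finite) sum.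
lemma pdoComp_Lop {B : ℤ → DPRing} {N : ℤ} (hB : ∀ m, N < m → B m = 0) (n : ℤ) :
    pdoComp (⇑Dx) Lop B n = B (n - 1) + Dx (B n) +
      ∑ p ∈ Finset.Icc 1 (N - n).toNat ×ˢ Finset.range (N - n).toNat,
        zchoose (-(p.1 : ℤ)) p.2 • (fv p.1 0 * (⇑Dx)^[p.2] (B (n + p.2 + p.1))) := by
  set box := Finset.Icc 1 (N - n).toNat ×ˢ Finset.range (N - n).toNat
  have hneg : ∀ z ∈ box.image fun q => (-(q.1 : ℤ), q.2), z.1 ≤ -1 := by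
    simp only [box, Finset.mem_image, Finset.mem_product, Finset.mem_Icc]
    rintro z ⟨q, hq, rfl⟩
    dsimp only; omega
  have h10 : ((1 : ℤ), 0) ∉ insert ((1 : ℤ), 1) (box.image fun q => (-(q.1 : ℤ), q.2)) := by
    rw [Finset.mem_insert, not_or]
    exact ⟨by simp, fun h => absurd (hneg _ h) (by norm_num)⟩
  have h11 : ((1 : ℤ), 1) ∉ box.image fun q => (-(q.1 : ℤ), q.2) :=
    fun h => absurd (hneg _ h) (by norm_num)
  have hinj : Set.InjOn (fun q : ℕ × ℕ => (-(q.1 : ℤ), q.2)) box := fun a _ b _ h => by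
    simp only [Prod.mk.injEq, neg_inj, Nat.cast_inj] at h; exact Prod.ext h.1 h.2
  rw [pdoComp, finsum_eq_sum_of_support_subset _ (support_pdoComp_Lop_summand_subset hB n),
    Finset.sum_insert h10, Finset.sum_insert h11, Finset.sum_image hinj, ← add_assoc]
  congr 1
  · simp [Lop_one, zchoose_zero_right, zchoose_one_one]
  · refine Finset.sum_congr rfl fun q hq => ?_
    have hq1 : 1 ≤ q.1 := (Finset.mem_Icc.mp (Finset.mem_product.mp hq).1).1
    simp only [Lop_neg_natCast hq1, mul_smul_comm, sub_neg_eq_add]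

lemma Lpow_zero_apply (n : ℤ) : Lpow 0 n = if n = 0 then 1 else 0 := rfl

lemma Lpow_eq_zero_of_lt {k : ℕ} {n : ℤ} (h : (k : ℤ) < n) : Lpow k n = 0 := by
  induction k generalizing n with
  | zero => simp [Lpow_zero_apply, show n ≠ 0 by omega]
  | succ k ih =>
    change pdoComp (⇑Dx) Lop (Lpow k) n = 0
    rw [pdoComp_Lop (fun m hm => ih hm), show ((k : ℤ) - n).toNat = 0 by omega,
      ih (by omega), ih (by omega)]
    simp

lemma Lpow_succ_apply_s12 (k : ℕ) (n : ℤ) :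
    Lpow (k + 1) n = Lpow k (n - 1) + Dx (Lpow k n) +
      ∑ p ∈ Finset.Icc 1 ((k : ℤ) - n).toNat ×ˢ Finset.range ((k : ℤ) - n).toNat,
        zchoose (-(p.1 : ℤ)) p.2 • (fv p.1 0 * (⇑Dx)^[p.2] (Lpow k (n + p.2 + p.1))) :=
  pdoComp_Lop (fun _ => Lpow_eq_zero_of_lt) n

lemma Dx_X (v : ℕ × ℕ) : Dx (X v) = X (v.1, v.2 + 1) := mkDerivation_X _ _ _

lemma Dx_eq_sum_pderiv {P : DPRing} {S : Finset (ℕ × ℕ)} (hS : P.vars ⊆ S) :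
    Dx P = ∑ v ∈ S, X (v.1, v.2 + 1) * pderiv v P := by
  classical
  let D : Derivation ℂ DPRing DPRing := ∑ v ∈ S, (X (v.1, v.2 + 1) : DPRing) • pderiv v
  have hD : ∀ Q, D Q = ∑ v ∈ S, X (v.1, v.2 + 1) * pderiv v Q := fun Q => by
    simp only [D, ← Derivation.coeFnAddMonoidHom_apply, map_sum, Finset.sum_apply]
    simp
  rw [← hD]
  refine derivation_eq_of_forall_mem_vars fun u hu => ?_
  simp [hD, Dx_X, pderiv_X, Pi.single_apply, hS hu]

lemma mapsTo_Dx_supported {s : Set (ℕ × ℕ)} (hs : ∀ v ∈ s, (v.1, v.2 + 1) ∈ s) :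
    Set.MapsTo Dx (supported ℂ s) (supported ℂ s) := by
  intro P hP
  induction hP using Algebra.adjoin_induction with
  | mem x hx =>
    obtain ⟨v, hv, rfl⟩ := hx
    exact Dx_X v ▸ (X_mem_supported (R := ℂ)).mpr (hs v hv)
  | algebraMap r => simp
  | add x y _ _ hx hy => exact map_add Dx x y ▸ add_mem hx hy
  | mul x y hx' hy' hx hy =>
    rw [Derivation.leibniz, smul_eq_mul, smul_eq_mul]
    exact add_mem (mul_mem hx' hy) (mul_mem hy' hx)

-- `∂ₓ` has weight `1` and `f_i` that of `∂ₓ^{i+1}`, which makes `L` homogeneous of weight `1`.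
def fvWeight (v : ℕ × ℕ) : ℤ := v.1 + v.2 + 1

lemma isWeightedHomogeneous_Dx {P : DPRing} {d : ℤ} (hP : P.IsWeightedHomogeneous fvWeight d) :
    (Dx P).IsWeightedHomogeneous fvWeight (d + 1) := by
  rw [Dx_eq_sum_pderiv subset_rfl]
  refine IsWeightedHomogeneous.sum _ _ _ fun v _ => ?_
  convert (isWeightedHomogeneous_X ℂ fvWeight (v.1, v.2 + 1)).mul
    (hP.pderiv (n' := d - fvWeight v) (sub_add_cancel _ _)) using 1
  simp only [fvWeight]; push_cast; ring

lemma isWeightedHomogeneous_Dx_iterate {P : DPRing} {d : ℤ}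
    (hP : P.IsWeightedHomogeneous fvWeight d) (l : ℕ) :
    ((⇑Dx)^[l] P).IsWeightedHomogeneous fvWeight (d + l) := by
  induction l with
  | zero => simpa using hP
  | succ l ih =>
    rw [Function.iterate_succ_apply', Nat.cast_succ, ← add_assoc]
    exact isWeightedHomogeneous_Dx ih

lemma Lpow_isWeightedHomogeneous (k : ℕ) (n : ℤ) :
    (Lpow k n).IsWeightedHomogeneous fvWeight (k - n) := by
  induction k generalizing n with
  | zero =>
    rw [Lpow_zero_apply]
    split_ifs with h
    · simpa [h] using isWeightedHomogeneous_one ℂ fvWeight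
    · exact isWeightedHomogeneous_zero ℂ fvWeight _
  | succ k ih =>
    have hdeg : ((k + 1 : ℕ) : ℤ) - n = k - (n - 1) := by push_cast; ring
    rw [Lpow_succ_apply_s12, hdeg]
    refine ((ih (n - 1)).add ?_).add (IsWeightedHomogeneous.sum _ _ _ fun p _ => ?_)
    · convert isWeightedHomogeneous_Dx (ih n) using 1; ring
    rw [← mem_weightedHomogeneousSubmodule]
    refine zsmul_mem ((mem_weightedHomogeneousSubmodule ..).mpr ?_) _
    convert (isWeightedHomogeneous_X ℂ fvWeight (p.1, 0)).mul
      (isWeightedHomogeneous_Dx_iterate (ih (n + p.2 + p.1)) p.2) using 1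
    · rfl
    · rw [fvWeight]; push_cast; ring

lemma Lpow_mem_supported (k : ℕ) (n : ℤ) : Lpow k n ∈ supported ℂ {v | 1 ≤ v.1} := by
  induction k generalizing n with
  | zero =>
    rw [Lpow_zero_apply]
    split_ifs
    · exact one_mem _
    · exact zero_mem _
  | succ k ih =>
    rw [Lpow_succ_apply_s12]
    have hDx := mapsTo_Dx_supported (s := {v : ℕ × ℕ | 1 ≤ v.1}) fun _ hv => hv
    refine add_mem (add_mem (ih _) (hDx (ih n))) (sum_mem fun p hp => zsmul_mem (mul_mem ?_ ?_) _)
    · exact (X_mem_supported (R := ℂ)).mpr (Finset.mem_Icc.mp (Finset.mem_product.mp hp).1).1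
    · exact (hDx.iterate p.2) (ih _)

lemma coeff_Dx_eq_zero {m : (ℕ × ℕ) →₀ ℕ} (hm : ∀ v ∈ m.support, v.2 = 0) (P : DPRing) :
    coeff m (Dx P) = 0 := by
  rw [Dx_eq_sum_pderiv subset_rfl, coeff_sum]
  refine Finset.sum_eq_zero fun v _ => ?_
  rw [coeff_X_mul', if_neg fun h => absurd (hm _ h) (Nat.succ_ne_zero _)]

lemma coeff_single_succ_Dx (i l : ℕ) (P : DPRing) :
    coeff (Finsupp.single (i, l + 1) 1) (Dx P) = coeff (Finsupp.single (i, l) 1) P := by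
  classical
  rw [Dx_eq_sum_pderiv (Finset.subset_insert (i, l) P.vars), coeff_sum,
    Finset.sum_eq_single_of_mem (i, l) (Finset.mem_insert_self _ _)]
  · simp [coeff_X_mul', coeff_pderiv]
  · intro v _ hv
    rw [coeff_X_mul', if_neg]
    simp only [Finsupp.mem_support_iff, Finsupp.single_apply, Prod.mk.injEq]
    grind

-- Every monomial of `∂ₓ P` contains a derivative, so only the terms `l = 0` of the sum survive.
lemma coeff_Lpow_succ_of_forall_snd_eq_zero {m : (ℕ × ℕ) →₀ ℕ} (hm : ∀ v ∈ m.support, v.2 = 0)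
    (k : ℕ) (n : ℤ) :
    coeff m (Lpow (k + 1) n) = coeff m (Lpow k (n - 1)) +
      ∑ i ∈ Finset.Icc 1 ((k : ℤ) - n).toNat, coeff m (fv i 0 * Lpow k (n + i)) := by
  rw [Lpow_succ_apply_s12, coeff_add, coeff_add, coeff_Dx_eq_zero hm, add_zero, coeff_sum,
    Finset.sum_product]
  congr 1
  refine Finset.sum_congr rfl fun i hi => ?_
  have hi := Finset.mem_Icc.mp hi
  rw [Finset.sum_eq_single_of_mem 0 (Finset.mem_range.mpr (by omega))]
  · simp [zchoose_zero_right]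
  · intro l _ hl
    obtain ⟨l, rfl⟩ := Nat.exists_eq_succ_of_ne_zero hl
    rw [coeff_smul, fv, coeff_X_mul', Function.iterate_succ_apply']
    split_ifs
    · rw [coeff_Dx_eq_zero fun v hv => hm v (Finsupp.support_tsub hv), smul_zero]
    · exact smul_zero _

lemma coeff_Lpow_succ_of_forall_snd_ne_zero {m : (ℕ × ℕ) →₀ ℕ} (hm : ∀ v ∈ m.support, v.2 ≠ 0)
    (k : ℕ) (n : ℤ) :
    coeff m (Lpow (k + 1) n) = coeff m (Lpow k (n - 1)) + coeff m (Dx (Lpow k n)) := by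
  rw [Lpow_succ_apply_s12, coeff_add, coeff_sum, ← coeff_add, add_eq_left]
  refine Finset.sum_eq_zero fun p _ => ?_
  rw [coeff_smul, fv, coeff_X_mul', if_neg fun h => hm _ h rfl, smul_zero]

lemma coeff_zero_Lpow_self (k : ℕ) : coeff 0 (Lpow k k) = 1 := by
  induction k with
  | zero => simp [Lpow_zero_apply]
  | succ k ih =>
    rw [coeff_Lpow_succ_of_forall_snd_eq_zero (by simp)]
    simpa using ih

lemma coeff_single_Lpow {i : ℕ} (hi : 1 ≤ i) (k l : ℕ) :
    coeff (Finsupp.single (i, l) 1) (Lpow k (k - (i + l + 1))) = k.choose (l + 1) := by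
  induction k generalizing l with
  | zero => rw [Lpow_zero_apply, if_neg (by omega)]; simp
  | succ k ih =>
    have hprev : ((k + 1 : ℕ) : ℤ) - (i + l + 1) - 1 = k - (i + l + 1) := by push_cast; ring
    cases l with
    | zero =>
      rw [coeff_Lpow_succ_of_forall_snd_eq_zero (by simp), hprev, ih,
        Finset.sum_eq_single_of_mem i (Finset.mem_Icc.mpr ⟨hi, by omega⟩)]
      · simp [fv, coeff_X_mul', coeff_zero_Lpow_self]
      · intro j _ hj
        rw [fv, coeff_X_mul', if_neg (by simpa using hj)]
    | succ l =>
      have hDx : ((k + 1 : ℕ) : ℤ) - (i + (l + 1 : ℕ) + 1) = k - (i + l + 1) := by push_cast; ring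
      rw [coeff_Lpow_succ_of_forall_snd_ne_zero (by simp), hprev, ih, hDx, coeff_single_succ_Dx, ih,
        Nat.choose_succ_succ' k (l + 1)]
      push_cast; ring

noncomputable def quadMon (c : ℕ) : (ℕ × ℕ) →₀ ℕ :=
  Finsupp.single (1, 0) 1 + Finsupp.single (c, 0) 1

lemma mem_support_quadMon {c : ℕ} {v : ℕ × ℕ} :
    v ∈ (quadMon c).support ↔ v = (1, 0) ∨ v = (c, 0) := by
  simp only [quadMon, Finsupp.mem_support_iff, Finsupp.add_apply, Finsupp.single_apply]
  grind

lemma coeff_quadMon_Lpow {c : ℕ} (hc : 1 ≤ c) (k : ℕ) :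
    coeff (quadMon c) (Lpow k (k - (c + 3))) = (k * (k - 1) : ℂ) / (if c = 1 then 2 else 1) := by
  induction k with
  | zero => rw [Lpow_zero_apply, if_neg (by omega)]; simp
  | succ k ih =>
    have hprev : ((k + 1 : ℕ) : ℤ) - (c + 3) - 1 = k - (c + 3) := by push_cast; ring
    have hM : (((k : ℤ) - (((k + 1 : ℕ) : ℤ) - (c + 3))).toNat) = c + 2 := by omega
    have hsnd : ∀ v ∈ (quadMon c).support, v.2 = 0 := by
      intro v hv; rcases mem_support_quadMon.mp hv with rfl | rfl <;> rfl
    have hlin : ∀ {a j : ℕ}, 1 ≤ a → (j : ℤ) + a = c + 1 →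
        coeff (Finsupp.single (a, 0) 1) (Lpow k (((k + 1 : ℕ) : ℤ) - (c + 3) + j)) = k := by
      intro a j ha hja
      rw [show ((k + 1 : ℕ) : ℤ) - (c + 3) + j = k - (a + ((0 : ℕ) : ℤ) + 1) by push_cast; omega,
        coeff_single_Lpow ha, Nat.choose_one_right]
    have h1 : coeff (quadMon c) (fv 1 0 * Lpow k (((k + 1 : ℕ) : ℤ) - (c + 3) + (1 : ℕ))) = k := by
      rw [fv, coeff_X_mul', if_pos (mem_support_quadMon.mpr (Or.inl rfl)), quadMon,
        add_tsub_cancel_left, hlin hc (by push_cast; ring)]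
    have hcc : coeff (quadMon c) (fv c 0 * Lpow k (((k + 1 : ℕ) : ℤ) - (c + 3) + c)) = k := by
      rw [fv, coeff_X_mul', if_pos (mem_support_quadMon.mpr (Or.inr rfl)), quadMon,
        add_tsub_cancel_right, hlin le_rfl (by push_cast; ring)]
    have hrest : ∀ j, j ≠ 1 → j ≠ c → ∀ P : DPRing, coeff (quadMon c) (fv j 0 * P) = 0 := by
      intro j hj1 hjc P
      rw [fv, coeff_X_mul', if_neg]
      rw [mem_support_quadMon]; simp [hj1, hjc]
    rw [coeff_Lpow_succ_of_forall_snd_eq_zero hsnd, hprev, ih, hM]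
    by_cases hc1 : c = 1
    · subst hc1
      rw [Finset.sum_eq_single_of_mem 1 (by simp), h1]
      · push_cast; ring
      · exact fun j _ hj => hrest j hj hj _
    · rw [Finset.sum_eq_add_of_mem 1 c (by simp) (by simp; omega) (Ne.symm hc1)
        (fun j _ hj => hrest j hj.1 hj.2 _), h1, hcc]
      simp only [hc1, ↓reduceIte, div_one]
      push_cast; ring

lemma weight_eq_and_one_le_of_coeff_Lpow_ne_zero {k : ℕ} {n : ℤ} {m : (ℕ × ℕ) →₀ ℕ}
    (h : coeff m (Lpow k n) ≠ 0) :
    Finsupp.weight fvWeight m = k - n ∧ ∀ v ∈ m.support, 1 ≤ v.1 :=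
  ⟨Lpow_isWeightedHomogeneous k n h, fun v hv =>
    mem_supported.mp (Lpow_mem_supported k n)
      ((mem_vars_iff_mem_support v).mpr ⟨m, mem_support_iff.mpr h, hv⟩)⟩

lemma two_mul_degree_le_weight {m : (ℕ × ℕ) →₀ ℕ} (h : ∀ v ∈ m.support, 1 ≤ v.1) :
    2 * (m.degree : ℤ) ≤ Finsupp.weight fvWeight m := by
  rw [Finsupp.degree_apply, Finsupp.weight_apply, Finsupp.sum, Nat.cast_sum, Finset.mul_sum]
  refine Finset.sum_le_sum fun v hv => ?_
  have := h v hv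
  simp only [fvWeight, nsmul_eq_mul]
  nlinarith

-- The factor `f_a^{(l)}`, `a ≥ c`, has weight at least `c + 1`, leaving room for exactly one
-- more factor of weight two, namely `f₁`.
lemma eq_quadMon_of_weight_eq {c : ℕ} {m : (ℕ × ℕ) →₀ ℕ}
    (hw : Finsupp.weight fvWeight m = c + 3) (h1 : ∀ v ∈ m.support, 1 ≤ v.1)
    (hdeg : 2 ≤ m.degree) {v : ℕ × ℕ} (hv : v ∈ m.support) (hcv : c ≤ v.1) :
    m = quadMon c := by
  set m' := m - Finsupp.single v 1
  have hm : m' + Finsupp.single v 1 = m :=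
    tsub_add_cancel_of_le (Finsupp.single_le_iff.mpr (Nat.one_le_iff_ne_zero.mpr
      (Finsupp.mem_support_iff.mp hv)))
  have hw' : Finsupp.weight fvWeight m' + (v.1 + v.2 + 1) = c + 3 := by
    rw [← hw, ← hm, map_add, Finsupp.weight_single, one_smul, fvWeight]
  have hdeg' : m'.degree + 1 = m.degree := by rw [← hm, map_add, Finsupp.degree_single]
  have hle := two_mul_degree_le_weight (m := m') fun u hu => h1 u (Finsupp.support_tsub hu)
  have hm'deg : m' ∈ {d | d.degree = 1} := by simp only [Set.mem_ofPred_eq]; omega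
  obtain ⟨u, hu⟩ := Finsupp.range_single_one ▸ hm'deg
  have hu1 : 1 ≤ u.1 := h1 u (Finsupp.support_tsub (show u ∈ m'.support by simp [← hu]))
  rw [← hu, Finsupp.weight_single, one_smul, fvWeight] at hw'
  obtain ⟨u1, u2⟩ := u
  obtain ⟨v1, v2⟩ := v
  obtain ⟨rfl, rfl, rfl, rfl⟩ : u1 = 1 ∧ u2 = 0 ∧ v1 = c ∧ v2 = 0 := by dsimp at *; omega
  rw [← hm, ← hu, quadMon]

noncomputable def linearPart (k : ℕ) : DPRing :=
  ∑ i ∈ Finset.range k, (k.choose (k - 1 - i) : ℂ) • fv (k - i) i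

lemma coeff_linearPart_of_degree_ne_one (k : ℕ) {m : (ℕ × ℕ) →₀ ℕ} (hm : m.degree ≠ 1) :
    coeff m (linearPart k) = 0 := by
  classical
  rw [linearPart, coeff_sum]
  refine Finset.sum_eq_zero fun i _ => ?_
  rw [coeff_smul, fv, coeff_X, if_neg fun h => hm (by rw [← h, Finsupp.degree_single]), smul_zero]

lemma coeff_single_linearPart (k a b : ℕ) :
    coeff (Finsupp.single (a, b) 1) (linearPart k) =
      if 1 ≤ a ∧ a + b = k then (k.choose (b + 1) : ℂ) else 0 := by
  classical
  simp only [linearPart, coeff_sum, coeff_smul, fv, coeff_X, Finsupp.single_left_inj one_ne_zero,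
    Prod.mk.injEq, smul_eq_mul, mul_ite, mul_one, mul_zero]
  split_ifs with hab
  · rw [Finset.sum_eq_single_of_mem b (Finset.mem_range.mpr (by omega))]
    · rw [if_pos ⟨by omega, rfl⟩,
        Nat.choose_symm_of_eq_add (show k = (k - 1 - b) + (b + 1) by omega)]
    · exact fun i _ hi => if_neg fun h => hi h.2
  · exact Finset.sum_eq_zero fun i hi => if_neg fun h => hab (by simp at hi; omega)

lemma coeff_Lpow_neg_one_of_degree_le_one (k : ℕ) {m : (ℕ × ℕ) →₀ ℕ} (hm : m.degree ≤ 1) :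
    coeff m (Lpow k (-1)) = coeff m (linearPart k) := by
  rcases Nat.le_one_iff_eq_zero_or_eq_one.mp hm with hm | hm
  · rw [coeff_linearPart_of_degree_ne_one k (by omega)]
    by_contra h
    have := (weight_eq_and_one_le_of_coeff_Lpow_ne_zero h).1
    rw [(Finsupp.degree_eq_zero_iff m).mp hm, map_zero] at this
    omega
  · obtain ⟨⟨a, b⟩, rfl⟩ : m ∈ Set.range fun v => Finsupp.single v 1 := by
      rw [Finsupp.range_single_one]; exact hm
    rw [coeff_single_linearPart]
    split_ifs with hab
    · rw [show (-1 : ℤ) = k - (a + b + 1) by omega, coeff_single_Lpow hab.1]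
    · by_contra h
      obtain ⟨hw, h1⟩ := weight_eq_and_one_le_of_coeff_Lpow_ne_zero h
      rw [Finsupp.weight_single, one_smul, fvWeight] at hw
      exact hab ⟨h1 (a, b) (by simp), by omega⟩

lemma coeff_Lpow_neg_one_eq_zero {k : ℕ} (hk : 3 ≤ k) {m : (ℕ × ℕ) →₀ ℕ} (hdeg : 2 ≤ m.degree)
    (hm : m ≠ quadMon (k - 2)) {v : ℕ × ℕ} (hv : v ∈ m.support) (hv1 : k - 2 ≤ v.1) :
    coeff m (Lpow k (-1)) = 0 := by
  by_contra h
  obtain ⟨hw, h1⟩ := weight_eq_and_one_le_of_coeff_Lpow_ne_zero h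
  exact hm (eq_quadMon_of_weight_eq (by rw [hw]; omega) h1 hdeg hv hv1)

lemma coeff_quadMon_Lpow_neg_one {k : ℕ} (hk : 3 ≤ k) :
    coeff (quadMon (k - 2)) (Lpow k (-1)) = (k * (k - 1) : ℂ) / (if k = 3 then 2 else 1) := by
  have := coeff_quadMon_Lpow (c := k - 2) (by omega) k
  rw [show (k : ℤ) - ((k - 2 : ℕ) + 3) = -1 by omega] at this
  simpa only [show k - 2 = 1 ↔ k = 3 by omega] using this

noncomputable def quadPart (k : ℕ) : DPRing :=
  ((k * (k - 1) : ℂ) / (if k = 3 then 2 else 1)) • (fv 1 0 * fv (k - 2) 0)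

lemma coeff_quadPart (k : ℕ) (m : (ℕ × ℕ) →₀ ℕ) :
    coeff m (quadPart k) =
      if quadMon (k - 2) = m then (k * (k - 1) : ℂ) / (if k = 3 then 2 else 1) else 0 := by
  rw [quadPart, fv, fv, X, X, monomial_mul, one_mul, ← quadMon, coeff_smul, coeff_monomial,
    smul_eq_mul, mul_ite, mul_one, mul_zero]

lemma coeff_Lpow_neg_one_sub_linearPart_sub_quadPart {k : ℕ} (hk : 3 ≤ k) {m : (ℕ × ℕ) →₀ ℕ}
    (hm : m.degree ≤ 1 ∨ ∃ v ∈ m.support, k - 2 ≤ v.1) :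
    coeff m (Lpow k (-1) - linearPart k - quadPart k) = 0 := by
  rw [coeff_sub, coeff_sub, coeff_quadPart]
  by_cases hdeg : m.degree ≤ 1
  · rw [coeff_Lpow_neg_one_of_degree_le_one k hdeg, if_neg (by rintro rfl; simp [quadMon] at hdeg),
      sub_self, sub_zero]
  obtain ⟨v, hv, hv1⟩ := hm.resolve_left hdeg
  rw [coeff_linearPart_of_degree_ne_one k (by omega), sub_zero]
  by_cases hq : quadMon (k - 2) = m
  · rw [if_pos hq, ← hq, coeff_quadMon_Lpow_neg_one hk, sub_self]
  · rw [if_neg hq, coeff_Lpow_neg_one_eq_zero hk (by omega) (Ne.symm hq) hv hv1, sub_zero]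

/-- For `k ≥ 1` the linear part of `w_k := res L^k` is
`Σ_{i=0}^{k-1} (k choose k-1-i) f_{k-i}^{(i)}`, and for `k ≥ 3`, in addition, the
quadratic monomial `f₁ f_{k-2}` appears with coefficient `k(k-1)/(1+δ_{k,3})` and the
remaining quadratic-and-higher part only involves the variables `f_a^{(l)}` with
`a ≤ k-3`. -/
theorem res_Lpow_linear_and_quadratic_part :
    (∀ k : ℕ, 1 ≤ k → ∃ E : DPRing, (∀ m ∈ E.support, 2 ≤ mdeg m) ∧
      Lpow k (-1) =
        (∑ i ∈ Finset.range k, (k.choose (k - 1 - i) : ℂ) • fv (k - i) i) + E) ∧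
    (∀ k : ℕ, 3 ≤ k → ∃ T : DPRing, (∀ m ∈ T.support, 2 ≤ mdeg m) ∧
      T ∈ MvPolynomial.supported ℂ {p : ℕ × ℕ | p.1 ≤ k - 3} ∧
      Lpow k (-1) =
        (∑ i ∈ Finset.range k, (k.choose (k - 1 - i) : ℂ) • fv (k - i) i) +
          ((k * (k - 1) : ℂ) / (if k = 3 then 2 else 1)) • (fv 1 0 * fv (k - 2) 0) + T) := by
  refine ⟨fun k _ => ⟨Lpow k (-1) - linearPart k, fun m hm => ?_, by rw [linearPart]; ring⟩,
    fun k hk => ⟨Lpow k (-1) - linearPart k - quadPart k, fun m hm => ?_,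
      mem_supported.mpr fun v hv => ?_, by rw [linearPart, quadPart]; ring⟩⟩
  · by_contra hdeg
    change ¬2 ≤ m.degree at hdeg
    rw [mem_support_iff, coeff_sub, sub_ne_zero] at hm
    exact hm (coeff_Lpow_neg_one_of_degree_le_one k (by omega))
  · by_contra hdeg
    change ¬2 ≤ m.degree at hdeg
    exact mem_support_iff.mp hm
      (coeff_Lpow_neg_one_sub_linearPart_sub_quadPart hk (Or.inl (by omega)))
  · obtain ⟨m, hm, hvm⟩ := (mem_vars_iff_mem_support v).mp hv
    by_contra hv1
    exact mem_support_iff.mp hm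
      (coeff_Lpow_neg_one_sub_linearPart_sub_quadPart hk (Or.inr ⟨v, hvm, by simp at hv1; omega⟩))
end
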